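/- arXiv:1812.09344 — 4 statements merged into one kernel-verified Lean document; each statement's English description precedes it below -/
import Mathlib

section
/- Let λ ≥ 2 and let N(λ) denote the number of pairs (m,n) of positive integers with m² + n² < λ. Then N(λ) > (π/4)·λ − 2√λ + 1. -/
open Real intervalIntegral

theorem quarter_circle_integral : ∫ x in (0:ℝ)..1, Real.sqrt (1 - x ^ 2) = π / 4 := by
  have h := integral_sqrt_one_sub_sq
  have hsym := intervalIntegral.integral_comp_neg (a := (0:ℝ)) (b := 1)
    (fun x => Real.sqrt (1 - x ^ 2))
  simp only [neg_sq, neg_zero, neg_neg] at hsym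
  have hcont : Continuous fun x : ℝ => Real.sqrt (1 - x ^ 2) := by fun_prop
  have hsplit := intervalIntegral.integral_add_adjacent_intervals
    (a := (-1:ℝ)) (b := 0) (c := 1) (μ := MeasureTheory.volume)
    (hcont.intervalIntegrable _ _) (hcont.intervalIntegrable _ _)
  rw [h] at hsplit
  rw [← hsym] at hsplit
  linarith

theorem quarter_disk (r : ℝ) (hr : 0 < r) :
    ∫ x in (0:ℝ)..r, Real.sqrt (r ^ 2 - x ^ 2) = π / 4 * r ^ 2 := by
  have h := intervalIntegral.integral_comp_mul_left (a := (0:ℝ)) (b := 1)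
    (fun x => Real.sqrt (r ^ 2 - x ^ 2)) (ne_of_gt hr)
  simp only [mul_zero, mul_one] at h
  have h2 : ∀ x : ℝ, Real.sqrt (r ^ 2 - (r * x) ^ 2) = r * Real.sqrt (1 - x ^ 2) := by
    intro x
    rw [show r ^ 2 - (r * x) ^ 2 = r ^ 2 * (1 - x ^ 2) by ring, Real.sqrt_mul (sq_nonneg r),
      Real.sqrt_sq hr.le]
  simp only [h2] at h
  rw [intervalIntegral.integral_const_mul, quarter_circle_integral, smul_eq_mul] at h
  have hr' : r ≠ 0 := ne_of_gt hr
  field_simp at h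
  nlinarith [h]

theorem dirichlet_counting_lower_bound
    (lam : ℝ) (hlam : 2 ≤ lam) :
    ((Set.ncard {p : ℕ × ℕ | 0 < p.1 ∧ 0 < p.2 ∧ ((p.1 : ℝ) ^ 2 + (p.2 : ℝ) ^ 2) < lam} : ℝ))
      > Real.pi / 4 * lam - 2 * Real.sqrt lam + 1 := by
  set S : Set (ℕ × ℕ) :=
    {p : ℕ × ℕ | 0 < p.1 ∧ 0 < p.2 ∧ ((p.1 : ℝ) ^ 2 + (p.2 : ℝ) ^ 2) < lam} with hS
  set r : ℝ := Real.sqrt lam with hrdef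
  have hlam0 : (0:ℝ) ≤ lam := by linarith
  have hrsq : r ^ 2 = lam := Real.sq_sqrt hlam0
  have hr1 : 1 ≤ r := by
    rw [hrdef, show (1:ℝ) = Real.sqrt 1 by simp]
    exact Real.sqrt_le_sqrt (by linarith)
  have hr0 : 0 < r := by linarith
  set f : ℝ → ℝ := fun x => Real.sqrt (lam - x ^ 2) with hfdef
  have hfc : Continuous f := by fun_prop
  set g : ℝ → ℝ := fun x => max (f x - 1) 0 with hgdef
  have hgc : Continuous g := by fun_prop
  have hg0 : ∀ x, 0 ≤ g x := fun x => le_max_right _ _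
  set M : ℕ := ⌊r⌋₊ with hMdef
  have hMr : (M : ℝ) ≤ r := Nat.floor_le hr0.le
  have hrM : r < (M : ℝ) + 1 := Nat.lt_floor_add_one r
  set c : ℕ → ℕ := fun m => ⌈f m⌉₊ - 1 with hcdef
  -- c m bounds g m
  have hcg : ∀ m : ℕ, g (m:ℝ) ≤ (c m : ℝ) := by
    intro m
    apply max_le _ (by positivity)
    by_cases h : 1 ≤ ⌈f (m:ℝ)⌉₊
    · have : (c m : ℝ) = (⌈f (m:ℝ)⌉₊ : ℝ) - 1 := by
        rw [hcdef]; push_cast [Nat.cast_sub h]; ring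
      rw [this]
      linarith [Nat.le_ceil (f (m:ℝ))]
    · have h0 : ⌈f (m:ℝ)⌉₊ = 0 := by omega
      have : f (m:ℝ) ≤ 0 := by rwa [Nat.ceil_eq_zero] at h0
      have : (c m : ℝ) = 0 := by simp [hcdef, h0]
      linarith
  -- the Finset of lattice points we count
  set T : Finset (ℕ × ℕ) :=
    (Finset.range M).biUnion (fun i => {i+1} ×ˢ Finset.Icc 1 (c (i+1))) with hTdef
  have hTcard : (T.card : ℝ) = ∑ i ∈ Finset.range M, (c (i+1) : ℝ) := by
    rw [hTdef, Finset.card_biUnion]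
    · push_cast
      congr 1
      funext i
      simp [Nat.card_Icc]
    · intro i _ j _ hij
      simp only [Finset.disjoint_left, Finset.mem_product, Finset.mem_singleton]
      rintro p ⟨h1, -⟩ ⟨h2, -⟩
      omega
  -- T ⊆ S
  have hTS : (T : Set (ℕ × ℕ)) ⊆ S := by
    intro p hp
    simp only [hTdef, Finset.coe_biUnion, Finset.mem_coe, Finset.mem_range, Set.mem_iUnion,
      Finset.mem_product, Finset.mem_singleton, Finset.mem_Icc] at hp
    obtain ⟨i, hiM, hp1, hn1, hn2⟩ := hp
    have hm : p.1 = i + 1 := hp1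
    have hmpos : 0 < p.1 := by omega
    have hnpos : 0 < p.2 := hn1
    refine ⟨hmpos, hnpos, ?_⟩
    set m := p.1
    set n := p.2
    have hmM : m ≤ M := by omega
    have hmr : (m : ℝ) ≤ r := le_trans (by exact_mod_cast Nat.cast_le.mpr hmM : (m:ℝ) ≤ (M:ℝ)) hMr
    have hm2 : (m:ℝ) ^ 2 ≤ lam := by
      rw [← hrsq]; exact pow_le_pow_left₀ (by positivity) hmr 2
    have hn2' : n ≤ c m := by rw [hm]; exact hn2
    have hceil : 1 ≤ ⌈f (m:ℝ)⌉₊ := by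
      rcases Nat.eq_zero_or_pos ⌈f (m:ℝ)⌉₊ with h | h
      · exfalso; have hc0 : c m = 0 := by simp [hcdef, h]
        omega
      · exact h
    have hn : (n : ℝ) ≤ (⌈f (m:ℝ)⌉₊ : ℝ) - 1 := by
      have h1 : (n : ℝ) ≤ (c m : ℝ) := by exact_mod_cast hn2'
      rw [hcdef] at h1
      push_cast [Nat.cast_sub hceil] at h1
      linarith
    have hlt : (n : ℝ) < f (m:ℝ) := by
      have h2 : (⌈f (m:ℝ)⌉₊ : ℝ) < f (m:ℝ) + 1 :=
        Nat.ceil_lt_add_one (Real.sqrt_nonneg (lam - (m:ℝ)^2))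
      linarith
    have hfn : f (m:ℝ) ^ 2 = lam - (m:ℝ)^2 := Real.sq_sqrt (by linarith)
    have : (n:ℝ)^2 < lam - (m:ℝ)^2 := by
      rw [← hfn]
      exact pow_lt_pow_left₀ hlt (by positivity) (by norm_num)
    linarith
  -- S finite
  have hSfin : S.Finite := by
    apply Set.Finite.subset (Finset.range ⌈lam⌉₊ ×ˢ Finset.range ⌈lam⌉₊ : Finset (ℕ × ℕ)).finite_toSet
    rintro ⟨a, b⟩ ⟨ha, hb, hab⟩
    have ha1 : (1:ℝ) ≤ (a:ℝ) := by exact_mod_cast ha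
    have hb1 : (1:ℝ) ≤ (b:ℝ) := by exact_mod_cast hb
    have haR : (a:ℝ) < lam := by nlinarith
    have hbR : (b:ℝ) < lam := by nlinarith
    simp only [Finset.coe_product, Set.mem_prod, Finset.mem_coe, Finset.mem_range]
    exact ⟨Nat.lt_ceil.mpr haR, Nat.lt_ceil.mpr hbR⟩
  -- ncard ≥ card T
  have hNT : (T.card : ℝ) ≤ (S.ncard : ℝ) := by
    have := Set.ncard_le_ncard hTS hSfin
    rw [Set.ncard_coe_finset] at this
    exact_mod_cast this
  -- antitone g
  have hganti : AntitoneOn g (Set.Icc (1:ℝ) (1 + (M:ℕ))) := by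
    intro a ha b hb hab
    apply max_le_max _ le_rfl
    apply sub_le_sub_right
    apply Real.sqrt_le_sqrt
    have ha0 : (0:ℝ) ≤ a := le_trans zero_le_one ha.1
    nlinarith
  have hsum_int := hganti.integral_le_sum
  -- sums
  have hsum1 : ∑ i ∈ Finset.range M, g (1 + (i:ℕ)) ≤ ∑ i ∈ Finset.range M, (c (i+1) : ℝ) := by
    apply Finset.sum_le_sum
    intro i _
    have : ((1:ℝ) + (i:ℕ)) = (((i+1 : ℕ)):ℝ) := by push_cast; ring
    rw [this]
    exact hcg (i+1)
  -- integrals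
  have hI01 : ∫ x in (0:ℝ)..r, f x = π / 4 * lam := by
    have := quarter_disk r hr0
    rw [hrsq] at this
    exact this
  have hI0bound : ∫ x in (0:ℝ)..1, f x ≤ r - 1 / (6*r) := by
    have heq : ∫ x in (0:ℝ)..1, (r - x^2/(2*r)) = r - 1/(6*r) := by
      rw [intervalIntegral.integral_sub intervalIntegrable_const
        (by apply Continuous.intervalIntegrable; fun_prop)]
      simp [intervalIntegral.integral_div, integral_pow]
      ring
    rw [← heq]
    apply intervalIntegral.integral_mono_on zero_le_one
      (hfc.intervalIntegrable _ _) (by apply Continuous.intervalIntegrable; fun_prop)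
    intro x hx
    have hx0 := hx.1
    have hx1 := hx.2
    have hpos : 0 ≤ r - x^2/(2*r) := by
      rw [sub_nonneg, div_le_iff₀ (by linarith)]
      nlinarith
    have hkey : lam - x^2 ≤ (r - x^2/(2*r))^2 := by
      have hexp : (r - x^2/(2*r))^2 = r^2 - x^2 + (x^2/(2*r))^2 := by
        field_simp; ring
      rw [hexp, hrsq]
      nlinarith [sq_nonneg (x^2/(2*r))]
    calc f x ≤ Real.sqrt ((r - x^2/(2*r))^2) := Real.sqrt_le_sqrt hkey
      _ = r - x^2/(2*r) := Real.sqrt_sq hpos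
  have hadj : (∫ x in (0:ℝ)..1, f x) + (∫ x in (1:ℝ)..r, f x) = ∫ x in (0:ℝ)..r, f x :=
    intervalIntegral.integral_add_adjacent_intervals
      (hfc.intervalIntegrable _ _) (hfc.intervalIntegrable _ _)
  have hsub : ∫ x in (1:ℝ)..r, (f x - 1) = (∫ x in (1:ℝ)..r, f x) - (r - 1) := by
    rw [intervalIntegral.integral_sub (hfc.intervalIntegrable _ _) intervalIntegrable_const]
    simp
  have hmono1 : ∫ x in (1:ℝ)..r, (f x - 1) ≤ ∫ x in (1:ℝ)..r, g x := by
    apply intervalIntegral.integral_mono_on hr1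
      (by apply Continuous.intervalIntegrable; fun_prop) (hgc.intervalIntegrable _ _)
    intro x _
    exact le_max_left _ _
  have hadj2 : (∫ x in (1:ℝ)..r, g x) + (∫ x in r..(1 + (M:ℕ) : ℝ), g x)
      = ∫ x in (1:ℝ)..(1 + (M:ℕ) : ℝ), g x :=
    intervalIntegral.integral_add_adjacent_intervals
      (hgc.intervalIntegrable _ _) (hgc.intervalIntegrable _ _)
  have htail : 0 ≤ ∫ x in r..(1 + (M:ℕ) : ℝ), g x :=
    intervalIntegral.integral_nonneg (by push_cast; linarith) (fun x _ => hg0 x)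
  -- put it together
  rw [hS] at *
  calc π / 4 * lam - 2 * r + 1
      < π / 4 * lam - (r - 1/(6*r)) - (r - 1) := by
        have : 0 < 1/(6*r) := by positivity
        linarith
    _ ≤ (∫ x in (0:ℝ)..r, f x) - (∫ x in (0:ℝ)..1, f x) - (r - 1) := by
        rw [hI01]; linarith
    _ = ∫ x in (1:ℝ)..r, (f x - 1) := by rw [hsub]; linarith
    _ ≤ ∫ x in (1:ℝ)..r, g x := hmono1
    _ ≤ ∫ x in (1:ℝ)..(1 + (M:ℕ) : ℝ), g x := by linarith
    _ ≤ ∑ i ∈ Finset.range M, g (1 + (i:ℕ)) := hsum_int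
    _ ≤ ∑ i ∈ Finset.range M, (c (i+1) : ℝ) := hsum1
    _ = (T.card : ℝ) := hTcard.symm
    _ ≤ (S.ncard : ℝ) := hNT
end

section
/- Suppose n ≥ 4 is an integer and λ ≥ 2 is a real number satisfying both n > (π/4)λ − 2√λ + 2 and π/j² ≥ (n − 4√λ)/λ, where j is the first positive zero of J₀. Then λ < 598. -/
open Real

/-- The Bessel function `J₀`, via its integral representation. -/
noncomputable def besselJ0 (x : ℝ) : ℝ :=
  (1 / Real.pi) * ∫ t in (0:ℝ)..Real.pi, Real.cos (x * Real.sin t)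

lemma aux_nonneg (f f' : ℝ → ℝ) (hd : ∀ x, HasDerivAt f (f' x) x)
    (h0 : f 0 = 0) (hf' : ∀ x, 0 ≤ x → 0 ≤ f' x) : ∀ x, 0 ≤ x → 0 ≤ f x := by
  intro x hx
  have mono : MonotoneOn f (Set.Ici 0) := by
    apply monotoneOn_of_deriv_nonneg (convex_Ici 0)
      (fun y _ => (hd y).continuousAt.continuousWithinAt)
      (fun y _ => ((hd y).differentiableAt).differentiableWithinAt)
    intro y hy
    rw [(hd y).deriv]
    rw [interior_Ici] at hy
    exact hf' y (le_of_lt hy)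
  have h := mono Set.self_mem_Ici (Set.mem_Ici.2 hx) hx
  rw [h0] at h; exact h

lemma s3 : ∀ x : ℝ, 0 ≤ x → 0 ≤ Real.sin x - (x - x^3/6) := by
  apply aux_nonneg _ (fun x => Real.cos x - (1 - x^2/2))
  · intro x
    have h := (Real.hasDerivAt_sin x).sub ((hasDerivAt_id x).sub ((hasDerivAt_pow 3 x).div_const 6))
    exact h.congr_deriv (by push_cast; ring)
  · norm_num
  · intro x _; have := Real.one_sub_sq_div_two_le_cos (x := x); linarith

lemma s4 : ∀ x : ℝ, 0 ≤ x → 0 ≤ (1 - x^2/2 + x^4/24) - Real.cos x := by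
  apply aux_nonneg _ (fun x => Real.sin x - (x - x^3/6))
  · intro x
    rw [show (fun x : ℝ => (1 - x^2/2 + x^4/24) - Real.cos x)
        = (fun x : ℝ => 1 + -(x^2/2) + x^4/24 - Real.cos x) from funext (fun y => by ring)]
    have h := (((hasDerivAt_const x (1:ℝ)).add ((hasDerivAt_pow 2 x).div_const 2).neg).add
      ((hasDerivAt_pow 4 x).div_const 24)).sub (Real.hasDerivAt_cos x)
    exact h.congr_deriv (by push_cast; ring)
  · norm_num
  · exact s3

lemma s5 : ∀ x : ℝ, 0 ≤ x → 0 ≤ (x - x^3/6 + x^5/120) - Real.sin x := by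
  apply aux_nonneg _ (fun x => (1 - x^2/2 + x^4/24) - Real.cos x)
  · intro x
    have h := (((hasDerivAt_id x).sub ((hasDerivAt_pow 3 x).div_const 6)).add
      ((hasDerivAt_pow 5 x).div_const 120)).sub (Real.hasDerivAt_sin x)
    exact h.congr_deriv (by push_cast; ring)
  · norm_num
  · exact s4

lemma s6 : ∀ x : ℝ, 0 ≤ x → 0 ≤ Real.cos x - (1 - x^2/2 + x^4/24 - x^6/720) := by
  apply aux_nonneg _ (fun x => (x - x^3/6 + x^5/120) - Real.sin x)
  · intro x
    rw [show (fun x : ℝ => Real.cos x - (1 - x^2/2 + x^4/24 - x^6/720))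
        = (fun x : ℝ => Real.cos x - (1 + -(x^2/2) + x^4/24 + -(x^6/720))) from
        funext (fun y => by ring)]
    have h := (Real.hasDerivAt_cos x).sub ((((hasDerivAt_const x (1:ℝ)).add
      ((hasDerivAt_pow 2 x).div_const 2).neg).add ((hasDerivAt_pow 4 x).div_const 24)).add
      ((hasDerivAt_pow 6 x).div_const 720).neg)
    exact h.congr_deriv (by push_cast; ring)
  · norm_num
  · exact s5

lemma s7 : ∀ x : ℝ, 0 ≤ x → 0 ≤ Real.sin x - (x - x^3/6 + x^5/120 - x^7/5040) := by
  apply aux_nonneg _ (fun x => Real.cos x - (1 - x^2/2 + x^4/24 - x^6/720))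
  · intro x
    rw [show (fun x : ℝ => Real.sin x - (x - x^3/6 + x^5/120 - x^7/5040))
        = (fun x : ℝ => Real.sin x - (x + -(x^3/6) + x^5/120 + -(x^7/5040))) from
        funext (fun y => by ring)]
    have h := (Real.hasDerivAt_sin x).sub ((((hasDerivAt_id x).add
      ((hasDerivAt_pow 3 x).div_const 6).neg).add ((hasDerivAt_pow 5 x).div_const 120)).add
      ((hasDerivAt_pow 7 x).div_const 5040).neg)
    exact h.congr_deriv (by push_cast; ring)
  · norm_num
  · exact s6

lemma s8 : ∀ x : ℝ, 0 ≤ x → 0 ≤ (1 - x^2/2 + x^4/24 - x^6/720 + x^8/40320) - Real.cos x := by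
  apply aux_nonneg _ (fun x => Real.sin x - (x - x^3/6 + x^5/120 - x^7/5040))
  · intro x
    rw [show (fun x : ℝ => (1 - x^2/2 + x^4/24 - x^6/720 + x^8/40320) - Real.cos x)
        = (fun x : ℝ => 1 + -(x^2/2) + x^4/24 + -(x^6/720) + x^8/40320 - Real.cos x) from
        funext (fun y => by ring)]
    have h := (((((hasDerivAt_const x (1:ℝ)).add ((hasDerivAt_pow 2 x).div_const 2).neg).add
      ((hasDerivAt_pow 4 x).div_const 24)).add ((hasDerivAt_pow 6 x).div_const 720).neg).add
      ((hasDerivAt_pow 8 x).div_const 40320)).sub (Real.hasDerivAt_cos x)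
    exact h.congr_deriv (by push_cast; ring)
  · norm_num
  · exact s7

lemma s9 : ∀ x : ℝ, 0 ≤ x → 0 ≤ (x - x^3/6 + x^5/120 - x^7/5040 + x^9/362880) - Real.sin x := by
  apply aux_nonneg _ (fun x => (1 - x^2/2 + x^4/24 - x^6/720 + x^8/40320) - Real.cos x)
  · intro x
    rw [show (fun x : ℝ => (x - x^3/6 + x^5/120 - x^7/5040 + x^9/362880) - Real.sin x)
        = (fun x : ℝ => x + -(x^3/6) + x^5/120 + -(x^7/5040) + x^9/362880 - Real.sin x) from
        funext (fun y => by ring)]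
    have h := (((((hasDerivAt_id x).add ((hasDerivAt_pow 3 x).div_const 6).neg).add
      ((hasDerivAt_pow 5 x).div_const 120)).add ((hasDerivAt_pow 7 x).div_const 5040).neg).add
      ((hasDerivAt_pow 9 x).div_const 362880)).sub (Real.hasDerivAt_sin x)
    exact h.congr_deriv (by push_cast; ring)
  · norm_num
  · exact s8

lemma cos_taylor_lb : ∀ x : ℝ, 0 ≤ x →
    1 - x^2/2 + x^4/24 - x^6/720 + x^8/40320 - x^10/3628800 ≤ Real.cos x := by
  have key : ∀ x : ℝ, 0 ≤ x →
      0 ≤ Real.cos x - (1 - x^2/2 + x^4/24 - x^6/720 + x^8/40320 - x^10/3628800) := by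
    apply aux_nonneg _ (fun x => (x - x^3/6 + x^5/120 - x^7/5040 + x^9/362880) - Real.sin x)
    · intro x
      rw [show (fun x : ℝ => Real.cos x - (1 - x^2/2 + x^4/24 - x^6/720 + x^8/40320 - x^10/3628800))
          = (fun x : ℝ => Real.cos x - (1 + -(x^2/2) + x^4/24 + -(x^6/720) + x^8/40320 + -(x^10/3628800))) from
          funext (fun y => by ring)]
      have h := (Real.hasDerivAt_cos x).sub ((((((hasDerivAt_const x (1:ℝ)).add
        ((hasDerivAt_pow 2 x).div_const 2).neg).add ((hasDerivAt_pow 4 x).div_const 24)).add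
        ((hasDerivAt_pow 6 x).div_const 720).neg).add ((hasDerivAt_pow 8 x).div_const 40320)).add
        ((hasDerivAt_pow 10 x).div_const 3628800).neg)
      exact h.congr_deriv (by push_cast; ring)
    · norm_num
    · exact s9
  intro x hx; linarith [key x hx]

lemma sinpow (n : ℕ) (v : ℝ) (h : π * ∏ i ∈ Finset.range n, (2 * (i : ℝ) + 1) / (2 * i + 2) = v) :
    ∫ t in (0:ℝ)..π, Real.sin t ^ (2*n) = v := by
  rw [integral_sin_pow_even]; exact h

lemma poly_int (x : ℝ) :
    ∫ t in (0:ℝ)..π, ((1:ℝ) + (-(x^2/2)) * Real.sin t^2 + (x^4/24) * Real.sin t^4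
      + (-(x^6/720)) * Real.sin t^6 + (x^8/40320) * Real.sin t^8
      + (-(x^10/3628800)) * Real.sin t^10)
    = π * (1 - x^2/4 + x^4/64 - x^6/2304 + x^8/147456 - x^10/14745600) := by
  have ii : ∀ (c : ℝ) (n : ℕ), IntervalIntegrable (fun t => c * Real.sin t ^ n)
      MeasureTheory.volume 0 π := by
    intro c n; apply Continuous.intervalIntegrable; fun_prop
  have i1 : IntervalIntegrable (fun _ : ℝ => (1:ℝ)) MeasureTheory.volume 0 π :=
    intervalIntegrable_const
  rw [intervalIntegral.integral_add (((((i1.add (ii _ 2)).add (ii _ 4)).add (ii _ 6)).add (ii _ 8))) (ii _ 10),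
      intervalIntegral.integral_add ((((i1.add (ii _ 2)).add (ii _ 4)).add (ii _ 6))) (ii _ 8),
      intervalIntegral.integral_add (((i1.add (ii _ 2)).add (ii _ 4))) (ii _ 6),
      intervalIntegral.integral_add ((i1.add (ii _ 2))) (ii _ 4),
      intervalIntegral.integral_add i1 (ii _ 2)]
  simp only [intervalIntegral.integral_const_mul, intervalIntegral.integral_const]
  have I2 : ∫ t in (0:ℝ)..π, Real.sin t ^ 2 = π/2 := by
    simp
  have I4 : ∫ t in (0:ℝ)..π, Real.sin t ^ 4 = 3*π/8 := by
    have := sinpow 2 (3*π/8) (by norm_num [Finset.prod_range_succ]; ring); norm_num at this; exact this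
  have I6 : ∫ t in (0:ℝ)..π, Real.sin t ^ 6 = 5*π/16 := by
    have := sinpow 3 (5*π/16) (by norm_num [Finset.prod_range_succ]; ring); norm_num at this; exact this
  have I8 : ∫ t in (0:ℝ)..π, Real.sin t ^ 8 = 35*π/128 := by
    have := sinpow 4 (35*π/128) (by norm_num [Finset.prod_range_succ]; ring); norm_num at this; exact this
  have I10 : ∫ t in (0:ℝ)..π, Real.sin t ^ 10 = 63*π/256 := by
    have := sinpow 5 (63*π/256) (by norm_num [Finset.prod_range_succ]; ring); norm_num at this; exact this
  rw [I2, I4, I6, I8, I10]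
  simp only [smul_eq_mul]
  ring

lemma besselJ0_lb (x : ℝ) (hx : 0 ≤ x) :
    1 - x^2/4 + x^4/64 - x^6/2304 + x^8/147456 - x^10/14745600 ≤ besselJ0 x := by
  have hmono : (∫ t in (0:ℝ)..π, ((1:ℝ) + (-(x^2/2)) * Real.sin t^2 + (x^4/24) * Real.sin t^4
      + (-(x^6/720)) * Real.sin t^6 + (x^8/40320) * Real.sin t^8
      + (-(x^10/3628800)) * Real.sin t^10))
      ≤ ∫ t in (0:ℝ)..π, Real.cos (x * Real.sin t) := by
    apply intervalIntegral.integral_mono_on Real.pi_pos.le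
    · apply Continuous.intervalIntegrable; fun_prop
    · apply Continuous.intervalIntegrable; fun_prop
    · intro t ht
      have hs0 : 0 ≤ Real.sin t := Real.sin_nonneg_of_nonneg_of_le_pi ht.1 ht.2
      have h := cos_taylor_lb (x * Real.sin t) (mul_nonneg hx hs0)
      calc (1:ℝ) + (-(x^2/2)) * Real.sin t^2 + (x^4/24) * Real.sin t^4
            + (-(x^6/720)) * Real.sin t^6 + (x^8/40320) * Real.sin t^8
            + (-(x^10/3628800)) * Real.sin t^10
          = 1 - (x*Real.sin t)^2/2 + (x*Real.sin t)^4/24 - (x*Real.sin t)^6/720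
            + (x*Real.sin t)^8/40320 - (x*Real.sin t)^10/3628800 := by ring
        _ ≤ Real.cos (x * Real.sin t) := h
  rw [poly_int x] at hmono
  unfold besselJ0
  calc 1 - x^2/4 + x^4/64 - x^6/2304 + x^8/147456 - x^10/14745600
      = (1/π) * (π * (1 - x^2/4 + x^4/64 - x^6/2304 + x^8/147456 - x^10/14745600)) := by
        field_simp
    _ ≤ (1/π) * ∫ t in (0:ℝ)..π, Real.cos (x * Real.sin t) :=
        mul_le_mul_of_nonneg_left hmono (by positivity)

lemma Qpos (y : ℝ) (h0 : 0 ≤ y) (h1 : y ≤ 5.7816) :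
    0 < 1 - y/4 + y^2/64 - y^3/2304 + y^4/147456 - y^5/14745600 := by
  nlinarith [sq_nonneg y, sq_nonneg (y - 5.7816), mul_nonneg h0 h0,
    mul_nonneg (mul_nonneg h0 h0) h0, mul_nonneg (sub_nonneg.2 h1) (mul_nonneg h0 h0),
    mul_nonneg (mul_nonneg (sub_nonneg.2 h1) (sub_nonneg.2 h1)) (mul_nonneg h0 h0),
    mul_nonneg (mul_nonneg (sub_nonneg.2 h1) h0) h0,
    mul_nonneg (mul_nonneg (mul_nonneg (sub_nonneg.2 h1) h0) h0) h0,
    mul_nonneg (mul_nonneg (mul_nonneg (mul_nonneg (sub_nonneg.2 h1) h0) h0) h0) h0]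

theorem courant_sharp_robin_upper_bound
    (j : ℝ) (hj : IsLeast {x : ℝ | 0 < x ∧ besselJ0 x = 0} j)
    (n : ℕ) (hn : 4 ≤ n) (lam : ℝ) (hlam : 2 ≤ lam)
    (h1 : (n : ℝ) > Real.pi / 4 * lam - 2 * Real.sqrt lam + 2)
    (h2 : Real.pi / j ^ 2 ≥ ((n : ℝ) - 4 * Real.sqrt lam) / lam) :
    lam < 598 := by
  obtain ⟨⟨hj0, hjz⟩, _⟩ := hj
  -- Step 1 : j ^ 2 > 5.7816
  have hj2 : (5.7816 : ℝ) < j ^ 2 := by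
    by_contra hcon
    push_neg at hcon
    have hb := besselJ0_lb j hj0.le
    have hq := Qpos (j ^ 2) (sq_nonneg j) hcon
    have hpj : 1 - j^2/4 + j^4/64 - j^6/2304 + j^8/147456 - j^10/14745600
        = 1 - j^2/4 + (j^2)^2/64 - (j^2)^3/2304 + (j^2)^4/147456 - (j^2)^5/14745600 := by ring
    rw [hjz] at hb
    rw [hpj] at hb
    linarith
  -- Step 2 : the arithmetic contradiction
  by_contra hcon
  push_neg at hcon
  set s := Real.sqrt lam with hsdef
  have hlampos : (0:ℝ) < lam := by linarith
  have hs2 : s ^ 2 = lam := Real.sq_sqrt hlampos.le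
  have hs0 : 0 ≤ s := Real.sqrt_nonneg lam
  have hs24 : (24.454 : ℝ) ≤ s := by
    nlinarith [hs2, hcon]
  -- from h2 : n - 4s ≤ (π / j²) * lam
  have hn2 : (n : ℝ) - 4 * s ≤ Real.pi / j ^ 2 * lam := by
    have := (div_le_iff₀ hlampos).mp (ge_iff_le.mp h2)
    linarith
  -- π / j² ≤ π / 5.7816
  have hdiv : Real.pi / j ^ 2 ≤ Real.pi / 5.7816 := by
    apply div_le_div_of_nonneg_left Real.pi_pos.le (by norm_num) hj2.le
  have hn3 : (n : ℝ) - 4 * s ≤ Real.pi / 5.7816 * lam := by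
    have := mul_le_mul_of_nonneg_right hdiv hlampos.le
    linarith
  -- combine with h1
  have hcomb : Real.pi / 4 * lam - 2 * s + 2 < Real.pi / 5.7816 * lam + 4 * s := by
    linarith
  have hpi_lo : (3.141592 : ℝ) < Real.pi := Real.pi_gt_d6
  -- π * lam * (1/4 - 1/5.7816) < 6 s - 2
  have hkey : Real.pi * lam * (1/4 - 1/5.7816) < 6 * s - 2 := by
    have hA : Real.pi / 4 * lam - Real.pi / 5.7816 * lam
        = Real.pi * lam * (1/4 - 1/5.7816) := by ring
    linarith
  have hmono2 : (3.141592 : ℝ) * lam * (1/4 - 1/5.7816) ≤ Real.pi * lam * (1/4 - 1/5.7816) := by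
    nlinarith [mul_nonneg (sub_nonneg.2 hpi_lo.le) hlampos.le]
  have hfin : (3.141592 : ℝ) * lam * (1/4 - 1/5.7816) < 6 * s - 2 := lt_of_le_of_lt hmono2 hkey
  rw [← hs2] at hfin
  nlinarith [sq_nonneg (s - 24.454), hs24, hfin]
end

section
/- For each nonnegative integer k, the function α_k(h) defined implicitly as the solution in [kπ, (k+1)π) of the Robin quantization condition satisfies the differential equation (α_k'(h)/α_k(h))·(hπ + α_k(h)²/2 + h²π²/2) = π for h > 0. -/
open Real

theorem robin_branch_ode
    (k : ℕ) (α : ℝ → ℝ) (h : ℝ) (hh : 0 < h)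
    (hdiff : ∀ t ∈ Set.Ioi (0:ℝ), DifferentiableAt ℝ α t)
    (hmem : ∀ t ∈ Set.Ioi (0:ℝ),
      α t ∈ Set.Ioo ((k : ℝ) * Real.pi) (((k : ℝ) + 1) * Real.pi))
    (hquant : ∀ t ∈ Set.Ioi (0:ℝ), α t * Real.tan (α t / 2) = t * Real.pi) :
    (deriv α h / α h) * (h * Real.pi + (α h) ^ 2 / 2 + h ^ 2 * Real.pi ^ 2 / 2)
      = Real.pi := by
  have hhI : h ∈ Set.Ioi (0:ℝ) := hh
  obtain ⟨hlo, hhi⟩ := hmem h hhI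
  have hπ := Real.pi_pos
  have ha_pos : 0 < α h := lt_of_le_of_lt (by positivity) hlo
  have ha_ne : α h ≠ 0 := ha_pos.ne'
  -- cos (α h / 2) ≠ 0
  have hcos : Real.cos (α h / 2) ≠ 0 := by
    intro hc
    rw [Real.cos_eq_zero_iff] at hc
    obtain ⟨n, hn⟩ := hc
    have hα : α h = (2 * (n:ℝ) + 1) * Real.pi := by
      field_simp at hn; linarith
    rw [hα] at hlo hhi
    have h1 : (k:ℝ) < 2 * (n:ℝ) + 1 := by
      have := lt_of_mul_lt_mul_right hlo hπ.le; linarith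
    have h2 : 2 * (n:ℝ) + 1 < (k:ℝ) + 1 := by
      have := lt_of_mul_lt_mul_right hhi hπ.le; linarith
    have h1' : (k:ℤ) < 2 * n + 1 := by exact_mod_cast h1
    have h2' : 2 * n + 1 < (k:ℤ) + 1 := by exact_mod_cast h2
    omega
  have hα' : HasDerivAt α (deriv α h) h := (hdiff h hhI).hasDerivAt
  have htan : HasDerivAt (fun t => Real.tan (α t / 2))
      ((1 / Real.cos (α h / 2) ^ 2) * (deriv α h / 2)) h :=
    by have := (Real.hasDerivAt_tan hcos).comp h (hα'.div_const 2); exact this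
  have hprod : HasDerivAt (fun t => α t * Real.tan (α t / 2))
      (deriv α h * Real.tan (α h / 2)
        + α h * ((1 / Real.cos (α h / 2) ^ 2) * (deriv α h / 2))) h :=
    hα'.mul htan
  have heq : (fun t => α t * Real.tan (α t / 2)) =ᶠ[nhds h] (fun t => t * Real.pi) := by
    filter_upwards [isOpen_Ioi.mem_nhds hhI] with t ht using hquant t ht
  have hlin : HasDerivAt (fun t : ℝ => t * Real.pi) (1 * Real.pi) h :=
    (hasDerivAt_id h).mul_const Real.pi
  have hD : deriv α h * Real.tan (α h / 2)
      + α h * ((1 / Real.cos (α h / 2) ^ 2) * (deriv α h / 2)) = 1 * Real.pi :=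
    (hprod.congr_of_eventuallyEq heq.symm).unique hlin
  -- tan value
  have hT : Real.tan (α h / 2) = h * Real.pi / α h := by
    field_simp
    linarith [hquant h hhI]
  have hsec : 1 / Real.cos (α h / 2) ^ 2 = 1 + Real.tan (α h / 2) ^ 2 := by
    have hpy := Real.sin_sq_add_cos_sq (α h / 2)
    rw [Real.tan_eq_sin_div_cos, div_pow]
    field_simp
    try linarith
  rw [hT] at hD hsec
  rw [hsec] at hD
  field_simp at hD
  have key : α h ^ 2 * (deriv α h * (h * Real.pi + α h ^ 2 / 2 + h ^ 2 * Real.pi ^ 2 / 2))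
      = α h ^ 2 * (Real.pi * α h) := by nlinarith [hD]
  have key2 := mul_left_cancel₀ (pow_ne_zero 2 ha_ne) key
  field_simp
  linarith [key2]
end

section
/- Let α₀, α₂ ∈ ℝ with 0 < α₀ < π < 2π ≤ α₂ < 3π, and suppose both satisfy the symmetric Robin condition α·tan(α/2) = hπ for the same h > 0, with α₀ ∈ (0,π) and α₂ ∈ (2π,3π). With u₀(x) = cos(α₀x/π − α₀/2) and u₂(x) = cos(α₂x/π − α₂/2) suitably normalized, the Wronskian W(x) = α₀ sin(α₀x/π) cos(α₂x/π) − α₂ sin(α₂x/π) cos(α₀x/π) satisfies W(0) = 0, W(π/2) = 0, and W'(x) = ((α₀² − α₂²)/π)·cos(α₀x/π)·cos(α₂x/π); moreover W(x) ≠ 0 for x ∈ (0, π/2). -/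
open Real

private lemma hasDerivW (α₀ α₂ x : ℝ) :
    HasDerivAt (fun x : ℝ => α₀ * Real.sin (α₀ * x / Real.pi) * Real.cos (α₂ * x / Real.pi)
        - α₂ * Real.sin (α₂ * x / Real.pi) * Real.cos (α₀ * x / Real.pi))
      (((α₀ ^ 2 - α₂ ^ 2) / Real.pi) * Real.cos (α₀ * x / Real.pi)
          * Real.cos (α₂ * x / Real.pi)) x := by
  have hπ : Real.pi ≠ 0 := Real.pi_ne_zero
  have harg : ∀ a : ℝ, HasDerivAt (fun x : ℝ => a * x / Real.pi) (a * 1 / Real.pi) x :=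
    fun a => ((hasDerivAt_id x).const_mul a).div_const Real.pi
  have hs : ∀ a : ℝ, HasDerivAt (fun x : ℝ => Real.sin (a * x / Real.pi))
      (Real.cos (a * x / Real.pi) * (a * 1 / Real.pi)) x :=
    fun a => (Real.hasDerivAt_sin _).comp x (harg a)
  have hc : ∀ a : ℝ, HasDerivAt (fun x : ℝ => Real.cos (a * x / Real.pi))
      (-Real.sin (a * x / Real.pi) * (a * 1 / Real.pi)) x :=
    fun a => (Real.hasDerivAt_cos _).comp x (harg a)
  have h1 := (((hs α₀).const_mul α₀).mul (hc α₂)).sub (((hs α₂).const_mul α₂).mul (hc α₀))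
  refine h1.congr_deriv ?_
  have := Real.sin_sq_add_cos_sq (α₀ * x / Real.pi)
  ring

set_option maxHeartbeats 1000000 in
theorem wronskian_lemma_fifth_eigenfunction
    (h α₀ α₂ : ℝ) (hh : 0 < h)
    (h0 : 0 < α₀) (h0' : α₀ < Real.pi)
    (h2 : 2 * Real.pi ≤ α₂) (h2' : α₂ < 3 * Real.pi)
    (hq0 : α₀ * Real.tan (α₀ / 2) = h * Real.pi)
    (hq2 : α₂ * Real.tan (α₂ / 2) = h * Real.pi) :
    (fun x : ℝ => α₀ * Real.sin (α₀ * x / Real.pi) * Real.cos (α₂ * x / Real.pi)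
        - α₂ * Real.sin (α₂ * x / Real.pi) * Real.cos (α₀ * x / Real.pi)) 0 = 0 ∧
    (fun x : ℝ => α₀ * Real.sin (α₀ * x / Real.pi) * Real.cos (α₂ * x / Real.pi)
        - α₂ * Real.sin (α₂ * x / Real.pi) * Real.cos (α₀ * x / Real.pi)) (Real.pi / 2) = 0 ∧
    (∀ x : ℝ,
      deriv (fun x : ℝ => α₀ * Real.sin (α₀ * x / Real.pi) * Real.cos (α₂ * x / Real.pi)
          - α₂ * Real.sin (α₂ * x / Real.pi) * Real.cos (α₀ * x / Real.pi)) x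
        = ((α₀ ^ 2 - α₂ ^ 2) / Real.pi) * Real.cos (α₀ * x / Real.pi)
            * Real.cos (α₂ * x / Real.pi)) ∧
    (∀ x ∈ Set.Ioo (0:ℝ) (Real.pi / 2),
      α₀ * Real.sin (α₀ * x / Real.pi) * Real.cos (α₂ * x / Real.pi)
        - α₂ * Real.sin (α₂ * x / Real.pi) * Real.cos (α₀ * x / Real.pi) ≠ 0) := by
  have hπ : (0:ℝ) < Real.pi := Real.pi_pos
  have hπ' : Real.pi ≠ 0 := ne_of_gt hπ
  set W : ℝ → ℝ := fun x : ℝ => α₀ * Real.sin (α₀ * x / Real.pi) * Real.cos (α₂ * x / Real.pi)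
        - α₂ * Real.sin (α₂ * x / Real.pi) * Real.cos (α₀ * x / Real.pi) with hW
  -- W(0) = 0
  have hW0 : W 0 = 0 := by simp [hW]
  -- W(π/2) = 0
  have hc0 : 0 < Real.cos (α₀ / 2) := by
    apply Real.cos_pos_of_mem_Ioo
    constructor <;> nlinarith
  have hc2 : Real.cos (α₂ / 2) < 0 := by
    apply Real.cos_neg_of_pi_div_two_lt_of_lt <;> nlinarith
  have hWhalf : W (Real.pi / 2) = 0 := by
    have e0 : α₀ * (Real.pi / 2) / Real.pi = α₀ / 2 := by field_simp
    have e2 : α₂ * (Real.pi / 2) / Real.pi = α₂ / 2 := by field_simp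
    have key : α₀ * Real.tan (α₀ / 2) = α₂ * Real.tan (α₂ / 2) := by rw [hq0, hq2]
    rw [Real.tan_eq_sin_div_cos, Real.tan_eq_sin_div_cos] at key
    have key2 : α₀ * Real.sin (α₀ / 2) * Real.cos (α₂ / 2)
        = α₂ * Real.sin (α₂ / 2) * Real.cos (α₀ / 2) := by
      field_simp [hc0.ne', hc2.ne] at key
      linarith [key]
    simp only [hW, e0, e2]
    linarith [key2]
  -- derivative
  have hderiv : ∀ x : ℝ, deriv W x = ((α₀ ^ 2 - α₂ ^ 2) / Real.pi) * Real.cos (α₀ * x / Real.pi)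
      * Real.cos (α₂ * x / Real.pi) := by
    intro x
    rw [hW]
    exact (hasDerivW α₀ α₂ x).deriv
  refine ⟨hW0, hWhalf, hderiv, ?_⟩
  -- sign analysis
  have hcont : Continuous W := by
    rw [hW]; fun_prop
  have hcneg : (α₀ ^ 2 - α₂ ^ 2) / Real.pi < 0 := by
    apply div_neg_of_neg_of_pos _ hπ
    nlinarith
  set t : ℝ := Real.pi ^ 2 / (2 * α₂) with ht
  have hα₂pos : 0 < α₂ := by nlinarith
  have ht0 : 0 < t := by positivity
  have htlt : t < Real.pi / 2 := by
    rw [ht, div_lt_div_iff₀ (by positivity) (by norm_num)]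
    nlinarith
  -- cos(α₀ x / π) > 0 for x ∈ (0, π/2)
  have hcos0 : ∀ x : ℝ, 0 < x → x < Real.pi / 2 → 0 < Real.cos (α₀ * x / Real.pi) := by
    intro x hx hx'
    apply Real.cos_pos_of_mem_Ioo
    constructor
    · have : 0 < α₀ * x / Real.pi := by positivity
      linarith
    · rw [div_lt_div_iff₀ hπ (by norm_num : (0:ℝ) < 2)]
      nlinarith
  -- cos(α₂ x / π) > 0 for 0 < x < t
  have hcos2pos : ∀ x : ℝ, 0 < x → x < t → 0 < Real.cos (α₂ * x / Real.pi) := by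
    intro x hx hx'
    apply Real.cos_pos_of_mem_Ioo
    constructor
    · have : 0 < α₂ * x / Real.pi := by positivity
      linarith
    · rw [div_lt_div_iff₀ hπ (by norm_num : (0:ℝ) < 2)]
      rw [ht, lt_div_iff₀ (by positivity : (0:ℝ) < 2 * α₂)] at hx'
      nlinarith
  -- cos(α₂ x / π) < 0 for t < x < π/2
  have hcos2neg : ∀ x : ℝ, t < x → x < Real.pi / 2 → Real.cos (α₂ * x / Real.pi) < 0 := by
    intro x hx hx'
    apply Real.cos_neg_of_pi_div_two_lt_of_lt
    · rw [ht, div_lt_iff₀ (by positivity : (0:ℝ) < 2 * α₂)] at hx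
      rw [div_lt_div_iff₀ (by norm_num : (0:ℝ) < 2) hπ]
      nlinarith
    · rw [div_lt_iff₀ hπ]
      nlinarith
  have hanti : StrictAntiOn W (Set.Icc 0 t) := by
    apply strictAntiOn_of_deriv_neg (convex_Icc 0 t) hcont.continuousOn
    intro x hx
    rw [interior_Icc] at hx
    rw [hderiv]
    have h1 := hcos0 x hx.1 (lt_trans hx.2 htlt)
    have h2 := hcos2pos x hx.1 hx.2
    exact mul_neg_of_neg_of_pos (mul_neg_of_neg_of_pos hcneg h1) h2
  have hmono : StrictMonoOn W (Set.Icc t (Real.pi / 2)) := by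
    apply strictMonoOn_of_deriv_pos (convex_Icc t (Real.pi / 2)) hcont.continuousOn
    intro x hx
    rw [interior_Icc] at hx
    rw [hderiv]
    have h1 := hcos0 x (lt_trans ht0 hx.1) hx.2
    have h2 := hcos2neg x hx.1 hx.2
    exact mul_pos_of_neg_of_neg (mul_neg_of_neg_of_pos hcneg h1) h2
  intro x hx
  obtain ⟨hx1, hx2⟩ := hx
  rcases le_or_gt x t with hxt | hxt
  · have : W x < W 0 := hanti ⟨le_refl 0, le_of_lt ht0⟩ ⟨le_of_lt hx1, hxt⟩ hx1
    rw [hW0] at this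
    exact ne_of_lt this
  · have : W x < W (Real.pi / 2) :=
      hmono ⟨le_of_lt hxt, le_of_lt hx2⟩ ⟨le_of_lt htlt, le_refl _⟩ hx2
    rw [hWhalf] at this
    exact ne_of_lt this
end
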